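/- Let X be a strongly 0-dimensional, σ-compact, locally compact metrizable space. Then the set of all metrics d ∈ Met(X) whose range is contained in some closed totally disconnected subset of [0,∞) containing 0, and the set of all gap-like metrics in Met(X), are both nonmeager (of second Baire category) in the space (Met(X), D_X). -/

import Mathlib

open Set
open scoped ENNReal

/-- The space `Met(X)` of metrics generating the topology of `X`. -/
def MetricCompat (X : Type*) [t : TopologicalSpace X] : Type _ :=
  { m : MetricSpace X // m.toUniformSpace.toTopologicalSpace = t }

namespace MetricCompat

variable {X : Type*} [TopologicalSpace X]

/-- The distance function of an element of `Met(X)`. -/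
noncomputable def dist (d : MetricCompat X) (x y : X) : ℝ := d.1.dist x y

/-- The supremum distance `D_X`, valued in `[0,∞]`. -/
noncomputable def supDist (d e : MetricCompat X) : ℝ≥0∞ :=
  ⨆ p : X × X, ENNReal.ofReal |d.dist p.1 p.2 - e.dist p.1 p.2|

/-- The topology on `Met(X)` induced by the open balls of `D_X`. -/
noncomputable instance : TopologicalSpace (MetricCompat X) :=
  TopologicalSpace.generateFrom
    { U | ∃ (d : MetricCompat X) (r : ℝ≥0∞), 0 < r ∧ U = { e | supDist d e < r } }

end MetricCompat

/-- A space is strongly `0`-dimensional if disjoint closed sets are separated by a clopen set. -/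
def StronglyZeroDim (X : Type*) [TopologicalSpace X] : Prop :=
  ∀ A B : Set X, IsClosed A → IsClosed B → Disjoint A B →
    ∃ V : Set X, IsClopen V ∧ A ⊆ V ∧ Disjoint V B

/-- The collection `Z` of closed totally disconnected subsets of `[0,∞)` containing `0`. -/
def ZFamily : Set (Set ℝ) :=
  { S | S ⊆ Set.Ici 0 ∧ IsClosed S ∧ IsTotallyDisconnected S ∧ (0 : ℝ) ∈ S }

/-- A metric `d` is gap-like if for every `p`, the set `{d(p,x) : x ∈ X}` is not dense in
any neighborhood of `0` in `[0,∞)`. -/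
def GapLike {X : Type*} [TopologicalSpace X] (d : MetricCompat X) : Prop :=
  ∀ p : X, ¬ ∃ U : Set ℝ, U ∈ nhdsWithin 0 (Set.Ici 0) ∧ U ⊆ Set.Ici 0 ∧
    U ⊆ closure { r : ℝ | ∃ x : X, d.dist p x = r }

/-!
`Met(X)` is a Baire space. The centres of a decreasing sequence of closed `D_X`-balls with radii
tending to `0` converge uniformly to a pseudometric `f` whose balls are neighbourhoods in `X`.
At each step we add a small multiple of `min d₀ 1`, where `d₀` is a fixed compatible metric; then
`f ≥ t (min d₀ 1 - κ)` for arbitrarily small `κ` (with `t` depending on `κ`), so `f` generates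
the topology of `X`.

Given `d ∈ Met(X)` and `δ > 0`, strong zero-dimensionality and the Lindelöf property partition
`X` into countably many clopen cells of `d`-diameter `≤ δ`. Replace the distance between points in
different cells by the supremum distance between the cells, rounded up to `δℕ`. This is a
compatible metric within `3δ` of `d` that omits every interval `(kδ, (k+1)δ)` with `k ≥ 1`, and
metrics near it still omit a smaller interval. Hence, for all rationals `0 ≤ p < q`, the metrics
omitting an interval inside `(p, q)` contain a dense open set, and the metrics whose distance set
`R` is nowhere dense form a residual set. Such a metric takes its values in the closed totally
disconnected set `{0} ∪ closure R` and is gap-like.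
-/

open Filter Topology Function

theorem min_one_le_min_one_add_min_one {a b c : ℝ} (hb : 0 ≤ b) (hc : 0 ≤ c) (h : a ≤ b + c) :
    min a 1 ≤ min b 1 + min c 1 := by
  rcases le_total b 1 with hb1 | hb1 <;> rcases le_total c 1 with hc1 | hc1 <;>
    simp only [min_eq_left, min_eq_right, hb1, hc1] <;>
    linarith [min_le_left a 1, min_le_right a 1]

theorem exists_forall_abs_sub_le {a b : ℕ → ℝ} (hb : Tendsto b atTop (𝓝 0))
    (hab : ∀ n m, n ≤ m → |a m - a n| ≤ b n) : ∃ L, ∀ n, |L - a n| ≤ b n := by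
  have hcauchy : CauchySeq a := cauchySeq_of_le_tendsto_0' b
    (fun n m h => by rw [Real.dist_eq, abs_sub_comm]; exact hab n m h) hb
  obtain ⟨L, hL⟩ := cauchySeq_tendsto_of_complete hcauchy
  exact ⟨L, fun n => le_of_tendsto ((hL.sub_const _).abs) (eventually_atTop.2 ⟨n, hab n⟩)⟩

theorem notMem_Ioo_of_le_or_eq_nat_mul {r δ : ℝ} (hδ : 0 < δ) {k : ℕ} (hk : 1 ≤ k)
    (hr : r ≤ δ ∨ ∃ m : ℕ, r = m * δ) : r ∉ Ioo (k * δ) ((k + 1) * δ) := by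
  rintro ⟨h1, h2⟩
  rcases hr with hr | ⟨m, rfl⟩
  · have : (1 : ℝ) ≤ k := by exact_mod_cast hk
    nlinarith
  · have hkm : k < m := by exact_mod_cast lt_of_mul_lt_mul_right h1 hδ.le
    have hmk : m < k + 1 := by exact_mod_cast lt_of_mul_lt_mul_right h2 hδ.le
    omega

theorem isNowhereDense_of_forall_rat {s : Set ℝ} (hs : s ⊆ Ici 0)
    (h : ∀ p q : ℚ, (0 : ℝ) ≤ p → (p : ℝ) < q →
      ∃ u v, (p : ℝ) < u ∧ u < v ∧ v < q ∧ Disjoint (Ioo u v) s) :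
    IsNowhereDense s := by
  refine eq_empty_iff_forall_notMem.2 fun x hx => ?_
  have hx0 : 0 ≤ x := closure_minimal hs isClosed_Ici (interior_subset hx)
  obtain ⟨l, w, ⟨hlx, hxw⟩, hsub⟩ :=
    mem_nhds_iff_exists_Ioo_subset.1 (isOpen_interior.mem_nhds hx)
  obtain ⟨p, hxp, hpw⟩ := exists_rat_btwn hxw
  obtain ⟨q, hpq, hqw⟩ := exists_rat_btwn hpw
  obtain ⟨u, v, hpu, huv, hvq, hdisj⟩ := h p q (hx0.trans hxp.le) hpq
  have hIoo : Ioo u v ⊆ closure s := fun z hz =>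
    interior_subset (hsub ⟨by linarith [hz.1], by linarith [hz.2]⟩)
  exact (nonempty_Ioo.2 huv).ne_empty ((hdisj.closure_right isOpen_Ioo).eq_bot_of_le hIoo)

theorem insert_zero_closure_mem_zFamily {s : Set ℝ} (hs0 : s ⊆ Ici 0) (hs : IsNowhereDense s) :
    insert 0 (closure s) ∈ ZFamily := by
  have hsub : insert 0 (closure s) ⊆ Ici 0 :=
    insert_subset_iff.2 ⟨self_mem_Ici, closure_minimal hs0 isClosed_Ici⟩
  refine ⟨hsub, by rw [insert_eq]; exact isClosed_singleton.union isClosed_closure,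
    isTotallyDisconnected_iff_lt.2 fun x hx y _ hxy => ?_, mem_insert 0 _⟩
  by_contra! hIoo
  have hIoo' : Ioo x y ⊆ closure s := fun z hz =>
    (not_not.1 fun hzT => hIoo z hzT hz).resolve_left ((hsub hx).trans_lt hz.1).ne'
  exact (nonempty_Ioo.2 hxy).ne_empty
    (eq_empty_of_subset_empty (hs ▸ interior_maximal hIoo' isOpen_Ioo))

section StronglyZeroDim

variable {X : Type*} [TopologicalSpace X]

theorem StronglyZeroDim.exists_isClopen_mem_subset [T1Space X] (hX : StronglyZeroDim X)
    {x : X} {U : Set X} (hU : U ∈ 𝓝 x) : ∃ V, IsClopen V ∧ x ∈ V ∧ V ⊆ U := by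
  obtain ⟨V, hV, hxV, hVU⟩ := hX {x} (interior U)ᶜ isClosed_singleton
    isOpen_interior.isClosed_compl
    (disjoint_singleton_left.2 (not_not.2 (mem_interior_iff_mem_nhds.2 hU)))
  exact ⟨V, hV, hxV rfl, (disjoint_compl_right_iff_subset.1 hVU).trans interior_subset⟩

theorem exists_isLocallyConstant_forall_mem {W : ℕ → Set X} (hW : ∀ n, IsClopen (W n))
    (hcov : ∀ x, ∃ n, x ∈ W n) :
    ∃ c : X → ℕ, IsLocallyConstant c ∧ ∀ x, x ∈ W (c x) := by
  classical
  refine ⟨fun x => Nat.find (hcov x), IsLocallyConstant.iff_isOpen_fiber.2 fun n => ?_,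
    fun x => Nat.find_spec (hcov x)⟩
  have hfiber : (fun x => Nat.find (hcov x)) ⁻¹' {n} = W n ∩ ⋂ i ∈ Iio n, (W i)ᶜ := by
    ext x
    simp [Nat.find_eq_iff]
  rw [hfiber]
  exact (hW n).isOpen.inter
    ((finite_Iio n).isOpen_biInter fun i _ => (hW i).isClosed.isOpen_compl)

theorem StronglyZeroDim.exists_isLocallyConstant_nat [T1Space X] [LindelofSpace X]
    (hX : StronglyZeroDim X) {U : X → Set X} (hU : ∀ x, U x ∈ 𝓝 x) :
    ∃ c : X → ℕ, IsLocallyConstant c ∧ ∀ y, ∃ x, ∀ z, c z = c y → z ∈ U x := by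
  choose V hV hxV hVU using fun x => hX.exists_isClopen_mem_subset (hU x)
  obtain ⟨t, htc, htcov⟩ :=
    LindelofSpace.elim_nhds_subcover V fun x => (hV x).isOpen.mem_nhds (hxV x)
  have hcov : ∀ y, ∃ x ∈ t, y ∈ V x := fun y => by simpa using eq_univ_iff_forall.1 htcov y
  rcases isEmpty_or_nonempty X with hempty | ⟨⟨x₀⟩⟩
  · exact ⟨fun _ => 0, IsLocallyConstant.const 0, fun y => isEmptyElim y⟩
  obtain ⟨w, rfl⟩ := htc.exists_eq_range (Exists.imp (fun _ h => h.1) (hcov x₀))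
  obtain ⟨c, hc, hcW⟩ := exists_isLocallyConstant_forall_mem (fun n => hV (w n)) fun y => by
    obtain ⟨_, ⟨n, rfl⟩, hy⟩ := hcov y
    exact ⟨n, hy⟩
  exact ⟨c, hc, fun y => ⟨w (c y), fun z hz => hVU _ (hz ▸ hcW z)⟩⟩

end StronglyZeroDim

namespace MetricCompat

variable {X : Type*} [TopologicalSpace X]

protected theorem dist_self (d : MetricCompat X) (x : X) : d.dist x x = 0 := d.1.dist_self x

protected theorem dist_comm (d : MetricCompat X) (x y : X) : d.dist x y = d.dist y x :=
  d.1.dist_comm x y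

protected theorem dist_triangle (d : MetricCompat X) (x y z : X) :
    d.dist x z ≤ d.dist x y + d.dist y z :=
  d.1.dist_triangle x y z

protected theorem dist_nonneg (d : MetricCompat X) (x y : X) : 0 ≤ d.dist x y :=
  @dist_nonneg X d.1.toPseudoMetricSpace x y

protected theorem eq_of_dist_eq_zero (d : MetricCompat X) {x y : X} (h : d.dist x y = 0) :
    x = y :=
  @eq_of_dist_eq_zero X d.1 x y h

theorem nhds_basis_dist (d : MetricCompat X) (x : X) :
    (𝓝 x).HasBasis (fun ε : ℝ => 0 < ε) fun ε => {y | d.dist x y < ε} := by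
  obtain ⟨m, rfl⟩ := d
  convert @Metric.nhds_basis_ball X m.toPseudoMetricSpace x using 2 with ε
  ext y
  exact (@Metric.mem_ball' X m.toPseudoMetricSpace _ _ _).symm

theorem continuous_dist (d : MetricCompat X) (x : X) : Continuous (d.dist x) := by
  obtain ⟨m, rfl⟩ := d
  exact @Continuous.dist X X m.toPseudoMetricSpace _ _ _ continuous_const continuous_id

theorem exists_forall_lt_mem_of_le (d : MetricCompat X) {f : X → X → ℝ}
    (hf : ∀ x y, d.dist x y ≤ f x y) {x : X} {U : Set X} (hU : U ∈ 𝓝 x) :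
    ∃ ε > 0, ∀ y, f x y < ε → y ∈ U := by
  obtain ⟨ε, hε, hsub⟩ := (d.nhds_basis_dist x).mem_iff.1 hU
  exact ⟨ε, hε, fun y hy => hsub ((hf x y).trans_lt hy)⟩

theorem exists_dist_eq (f : X → X → ℝ) (hself : ∀ x, f x x = 0)
    (hcomm : ∀ x y, f x y = f y x) (htri : ∀ x y z, f x z ≤ f x y + f y z)
    (hpos : ∀ x y, f x y = 0 → x = y)
    (hsmall : ∀ x, ∀ ε > 0, ∀ᶠ y in 𝓝 x, f x y < ε)
    (hball : ∀ x, ∀ U ∈ 𝓝 x, ∃ ε > 0, ∀ y, f x y < ε → y ∈ U) :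
    ∃ d : MetricCompat X, d.dist = f := by
  refine ⟨⟨MetricSpace.ofDistTopology f hself hcomm htri (fun s => ?_) hpos, rfl⟩, rfl⟩
  refine isOpen_iff_mem_nhds.trans ⟨fun h x hx => hball x s (h x hx), fun h x hx => ?_⟩
  obtain ⟨ε, hε, hs⟩ := h x hx
  filter_upwards [hsmall x ε hε] using hs

theorem exists_dist_eq_add_min (d d0 : MetricCompat X) {s : ℝ} (hs : 0 ≤ s) :
    ∃ e : MetricCompat X, ∀ x y, e.dist x y = d.dist x y + s * min (d0.dist x y) 1 := by
  have hle : ∀ x y, d.dist x y ≤ d.dist x y + s * min (d0.dist x y) 1 := fun x y =>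
    le_add_of_nonneg_right (mul_nonneg hs (le_min (d0.dist_nonneg x y) zero_le_one))
  obtain ⟨e, he⟩ := exists_dist_eq (fun x y => d.dist x y + s * min (d0.dist x y) 1)
    (fun x => by simp [MetricCompat.dist_self])
    (fun x y => by rw [d.dist_comm, d0.dist_comm])
    (fun x y z => by
      have := mul_le_mul_of_nonneg_left (min_one_le_min_one_add_min_one (d0.dist_nonneg x y)
        (d0.dist_nonneg y z) (d0.dist_triangle x y z)) hs
      linarith [d.dist_triangle x y z])
    (fun x y h => d.eq_of_dist_eq_zero (le_antisymm ((hle x y).trans h.le) (d.dist_nonneg x y)))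
    (fun x ε hε => Tendsto.eventually_lt_const (by simpa [MetricCompat.dist_self] using hε)
      (((d.continuous_dist x).add
        (continuous_const.mul ((d0.continuous_dist x).min continuous_const))).tendsto x))
    (fun x U hU => d.exists_forall_lt_mem_of_le hle hU)
  exact ⟨e, fun x y => by rw [he]⟩

/-- Uniform approximation by compatible metrics makes the `f`-balls neighbourhoods; the lower
bound makes every neighbourhood contain an `f`-ball, as it does for `d0`. -/
theorem exists_dist_eq_of_approx (d0 : MetricCompat X) {f : X → X → ℝ}
    (happrox : ∀ ε > 0, ∃ d : MetricCompat X, ∀ x y, |f x y - d.dist x y| ≤ ε)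
    (hfloor : ∀ κ > 0, ∃ t > 0, ∀ x y, t * (min (d0.dist x y) 1 - κ) ≤ f x y) :
    ∃ e : MetricCompat X, e.dist = f := by
  refine exists_dist_eq f (fun x => ?_) (fun x y => ?_) (fun x y z => ?_) (fun x y hxy => ?_)
    (fun x ε hε => ?_) (fun x U hU => ?_)
  · refine eq_of_forall_dist_le fun ε hε => ?_
    obtain ⟨d, hd⟩ := happrox ε hε
    simpa [Real.dist_eq, d.dist_self] using hd x x
  · refine eq_of_forall_dist_le fun ε hε => ?_
    obtain ⟨d, hd⟩ := happrox (ε / 2) (half_pos hε)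
    have h1 := abs_le.1 (hd x y)
    have h2 := abs_le.1 (hd y x)
    rw [d.dist_comm] at h2
    rw [Real.dist_eq, abs_le]
    constructor <;> linarith
  · refine le_of_forall_pos_le_add fun ε hε => ?_
    obtain ⟨d, hd⟩ := happrox (ε / 3) (by positivity)
    linarith [d.dist_triangle x y z, (abs_le.1 (hd x z)).2, (abs_le.1 (hd x y)).1,
      (abs_le.1 (hd y z)).1]
  · by_contra hne
    have hm : 0 < min (d0.dist x y) 1 :=
      lt_min ((d0.dist_nonneg x y).lt_of_ne fun h => hne (d0.eq_of_dist_eq_zero h.symm)) one_pos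
    obtain ⟨t, ht, hf⟩ := hfloor _ (half_pos hm)
    nlinarith [hf x y]
  · obtain ⟨d, hd⟩ := happrox (ε / 2) (half_pos hε)
    filter_upwards [(d.nhds_basis_dist x).mem_of_mem (half_pos hε)] with y hy
    linarith [(abs_le.1 (hd x y)).2, show d.dist x y < ε / 2 from hy]
  · obtain ⟨c, hc, hsub⟩ := (d0.nhds_basis_dist x).mem_iff.1 hU
    obtain ⟨t, ht, hf⟩ := hfloor (min c 1 / 2) (by positivity)
    refine ⟨t * (min c 1 / 2), by positivity, fun y hy => hsub ?_⟩
    have hlt : min (d0.dist x y) 1 < min c 1 := by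
      by_contra! h
      nlinarith [hf x y]
    exact not_le.1 fun h => hlt.not_ge (min_le_min_right 1 h)

def closedBall (d : MetricCompat X) (r : ℝ) : Set (MetricCompat X) :=
  {e | ∀ x y, |e.dist x y - d.dist x y| ≤ r}

theorem mem_closedBall_self (d : MetricCompat X) {r : ℝ} (hr : 0 ≤ r) : d ∈ closedBall d r :=
  fun x y => by simpa using hr

theorem closedBall_subset_closedBall (d : MetricCompat X) {r r' : ℝ} (h : r ≤ r') :
    closedBall d r ⊆ closedBall d r' :=
  fun _ he x y => (he x y).trans h

theorem supDist_le_ofReal_iff {d e : MetricCompat X} {r : ℝ} (hr : 0 ≤ r) :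
    supDist d e ≤ ENNReal.ofReal r ↔ e ∈ closedBall d r := by
  simp only [supDist, iSup_le_iff, ENNReal.ofReal_le_ofReal_iff hr, Prod.forall, closedBall,
    mem_ofPred_eq]
  exact forall₂_congr fun x y => by rw [abs_sub_comm]

theorem supDist_self (d : MetricCompat X) : supDist d d = 0 :=
  nonpos_iff_eq_zero.1 (iSup_le fun _ => by simp)

theorem supDist_triangle (d e f : MetricCompat X) :
    supDist d f ≤ supDist d e + supDist e f := by
  refine iSup_le fun p => ?_
  calc ENNReal.ofReal |d.dist p.1 p.2 - f.dist p.1 p.2|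
      ≤ ENNReal.ofReal |d.dist p.1 p.2 - e.dist p.1 p.2|
          + ENNReal.ofReal |e.dist p.1 p.2 - f.dist p.1 p.2| :=
        (ENNReal.ofReal_le_ofReal (abs_sub_le _ _ _)).trans ENNReal.ofReal_add_le
    _ ≤ supDist d e + supDist e f := by
        gcongr <;> exact le_iSup (fun p : X × X => ENNReal.ofReal |_ - _|) p

theorem exists_closedBall_subset_of_isOpen {U : Set (MetricCompat X)} (hU : IsOpen U)
    {d : MetricCompat X} (hd : d ∈ U) : ∃ r > 0, closedBall d r ⊆ U := by
  induction hU generalizing d with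
  | basic V hV =>
    obtain ⟨c, R, -, rfl⟩ := hV
    obtain ⟨ρ, hρ, hlt⟩ := ENNReal.lt_iff_exists_add_pos_lt.1 hd
    refine ⟨ρ, hρ, fun e he => (supDist_triangle c d e).trans_lt (lt_of_le_of_lt ?_ hlt)⟩
    gcongr
    simpa using (supDist_le_ofReal_iff ρ.2).2 he
  | univ => exact ⟨1, one_pos, subset_univ _⟩
  | inter V W _ _ ihV ihW =>
    obtain ⟨r, hr, hV⟩ := ihV hd.1
    obtain ⟨r', hr', hW⟩ := ihW hd.2
    exact ⟨min r r', lt_min hr hr', fun e he =>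
      ⟨hV (closedBall_subset_closedBall d (min_le_left r r') he),
        hW (closedBall_subset_closedBall d (min_le_right r r') he)⟩⟩
  | sUnion S _ ih =>
    obtain ⟨V, hVS, hdV⟩ := hd
    obtain ⟨r, hr, hV⟩ := ih V hVS hdV
    exact ⟨r, hr, hV.trans (subset_sUnion_of_mem hVS)⟩

theorem nhds_basis_closedBall (d : MetricCompat X) :
    (𝓝 d).HasBasis (fun r : ℝ => 0 < r) (closedBall d) := by
  refine ⟨fun U => ⟨fun hU => ?_, fun ⟨r, hr, hsub⟩ => ?_⟩⟩
  · obtain ⟨V, hVU, hV, hdV⟩ := mem_nhds_iff.1 hU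
    obtain ⟨r, hr, hsub⟩ := exists_closedBall_subset_of_isOpen hV hdV
    exact ⟨r, hr, hsub.trans hVU⟩
  · have hball : IsOpen {e | supDist d e < ENNReal.ofReal r} :=
      TopologicalSpace.isOpen_generateFrom_of_mem ⟨d, _, ENNReal.ofReal_pos.2 hr, rfl⟩
    refine mem_of_superset (hball.mem_nhds (by simpa [supDist_self] using hr)) fun e he => ?_
    exact hsub ((supDist_le_ofReal_iff hr.le).1 (le_of_lt he))

/-- One step of the Baire argument: the lower bound comes from adding `s * min d0 1` to `d`
before moving into `U`. -/
theorem exists_closedBall_subset_inter_of_dense (d0 d : MetricCompat X)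
    {U : Set (MetricCompat X)} (hUo : IsOpen U) (hUd : Dense U) {r : ℝ} (hr : 0 < r) :
    ∃ d' r', 0 < r' ∧ r' ≤ r / 2 ∧ closedBall d' r' ⊆ closedBall d r ∩ U ∧
      ∃ t > 0, ∀ x y, t * (min (d0.dist x y) 1 - r) ≤ d'.dist x y - r' := by
  set s := r / 4 with hs
  set ρ := s * min r 1 / 2 with hρ_def
  have hρ : 0 < ρ := by positivity
  have hρs : ρ ≤ s / 2 := by
    have := mul_le_mul_of_nonneg_left (min_le_right r 1) (by positivity : 0 ≤ s)
    linarith [hρ_def]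
  have hρr : 2 * ρ ≤ s * r := by
    have := mul_le_mul_of_nonneg_left (min_le_left r 1) (by positivity : 0 ≤ s)
    linarith [hρ_def]
  obtain ⟨e, he⟩ := exists_dist_eq_add_min d d0 (by positivity : 0 ≤ s)
  obtain ⟨d', hd'U, hd'e⟩ :=
    (mem_closure_iff_nhds_basis (nhds_basis_closedBall e)).1 (hUd e) ρ hρ
  obtain ⟨r₁, hr₁, hsub⟩ := (nhds_basis_closedBall d').mem_iff.1 (hUo.mem_nhds hd'U)
  have hm : ∀ x y, 0 ≤ s * min (d0.dist x y) 1 ∧ s * min (d0.dist x y) 1 ≤ s := fun x y =>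
    ⟨mul_nonneg (by positivity) (le_min (d0.dist_nonneg x y) zero_le_one),
      mul_le_of_le_one_right (by positivity) (min_le_right _ _)⟩
  refine ⟨d', min r₁ ρ, lt_min hr₁ hρ, by linarith [min_le_right r₁ ρ, hs],
    fun g hg => ⟨fun x y => ?_, hsub (closedBall_subset_closedBall d' (min_le_left r₁ ρ) hg)⟩,
    s, by positivity, fun x y => ?_⟩
  · have h1 := abs_le.1 (hg x y)
    have h2 := abs_le.1 (hd'e x y)
    rw [he] at h2
    rw [abs_le]
    constructor <;> linarith [min_le_right r₁ ρ, hm x y, hs]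
  · have h2 := abs_le.1 (hd'e x y)
    rw [he] at h2
    nlinarith [min_le_right r₁ ρ, d.dist_nonneg x y]

theorem exists_forall_mem_closedBall (d0 : MetricCompat X) {d : ℕ → MetricCompat X}
    {r : ℕ → ℝ} (hr : Tendsto r atTop (𝓝 0)) (hr0 : ∀ n, 0 ≤ r n)
    (hanti : Antitone fun n => closedBall (d n) (r n))
    (hfloor : ∀ n, ∃ t > 0, ∀ x y,
      t * (min (d0.dist x y) 1 - r n) ≤ (d (n + 1)).dist x y - r (n + 1)) :
    ∃ e, ∀ n, e ∈ closedBall (d n) (r n) := by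
  choose f hf using fun x y => exists_forall_abs_sub_le hr fun n m h =>
    hanti h (mem_closedBall_self (d m) (hr0 m)) x y
  have happrox : ∀ ε > 0, ∃ d' : MetricCompat X, ∀ x y, |f x y - d'.dist x y| ≤ ε := by
    intro ε hε
    obtain ⟨n, hn⟩ := (hr.eventually (ge_mem_nhds hε)).exists
    exact ⟨d n, fun x y => (hf x y n).trans hn⟩
  have hfloor' : ∀ κ > 0, ∃ t > 0, ∀ x y, t * (min (d0.dist x y) 1 - κ) ≤ f x y := by
    intro κ hκ
    obtain ⟨n, hn⟩ := (hr.eventually (ge_mem_nhds hκ)).exists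
    obtain ⟨t, ht, hft⟩ := hfloor n
    refine ⟨t, ht, fun x y => ?_⟩
    nlinarith [hft x y, (abs_le.1 (hf x y (n + 1))).1]
  obtain ⟨e, rfl⟩ := exists_dist_eq_of_approx d0 happrox hfloor'
  exact ⟨e, fun n x y => hf x y n⟩

protected theorem dense_iInter_of_isOpen {U : ℕ → Set (MetricCompat X)}
    (hUo : ∀ n, IsOpen (U n)) (hUd : ∀ n, Dense (U n)) : Dense (⋂ n, U n) := by
  refine dense_iff_inter_open.2 fun W hWo ⟨d0, hd0W⟩ => ?_
  obtain ⟨r0, hr0, hW⟩ := (nhds_basis_closedBall d0).mem_iff.1 (hWo.mem_nhds hd0W)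
  have : Nonempty (MetricCompat X) := ⟨d0⟩
  choose! F G hF using fun (n : ℕ) (p : MetricCompat X × ℝ) (hp : 0 < p.2) =>
    exists_closedBall_subset_inter_of_dense d0 p.1 (hUo n) (hUd n) hp
  let p : ℕ → MetricCompat X × ℝ := fun n => Nat.rec (d0, r0) (fun n q => (F n q, G n q)) n
  have hpos : ∀ n, 0 < (p n).2 := by
    intro n
    induction n with
    | zero => exact hr0
    | succ n ih => exact (hF n (p n) ih).1
  have hstep := fun n => hF n (p n) (hpos n)
  have hhalf : ∀ n, (p n).2 ≤ r0 * (1 / 2) ^ n := by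
    intro n
    induction n with
    | zero => simp [p]
    | succ n ih => rw [pow_succ, ← mul_assoc]; linarith [(hstep n).2.1]
  have hr : Tendsto (fun n => (p n).2) atTop (𝓝 0) := by
    refine squeeze_zero (fun n => (hpos n).le) hhalf ?_
    simpa using (tendsto_pow_atTop_nhds_zero_of_lt_one (r := (1 / 2 : ℝ)) (by norm_num)
      (by norm_num)).const_mul r0
  obtain ⟨e, he⟩ := exists_forall_mem_closedBall d0 (d := fun n => (p n).1) hr
    (fun n => (hpos n).le)
    (antitone_nat_of_succ_le fun n => (hstep n).2.2.1.trans inter_subset_left)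
    fun n => (hstep n).2.2.2
  exact ⟨e, hW (he 0), mem_iInter.2 fun n => ((hstep n).2.2.1 (he (n + 1))).2⟩

instance : BaireSpace (MetricCompat X) :=
  ⟨fun _ hUo hUd => MetricCompat.dense_iInter_of_isOpen hUo hUd⟩

/-- `S` below is the supremum distance between two cells. Unlike the infimum, it satisfies the
triangle inequality exactly. Rounding up to the grid `δℕ` preserves that inequality because the
grid is closed under addition. -/
theorem exists_gridValued_cellDist (e : MetricCompat X) {ι : Type*} (c : X → ι) {δ : ℝ}
    (hδ : 0 < δ) (hdiam : ∀ x y, c x = c y → e.dist x y ≤ δ) :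
    ∃ R : ι → ι → ℝ, (∀ i j, R i j = R j i) ∧
      (∀ x y z, R (c x) (c z) ≤ R (c x) (c y) + R (c y) (c z)) ∧
      (∀ x y, e.dist x y ≤ R (c x) (c y) ∧ R (c x) (c y) ≤ e.dist x y + 3 * δ) ∧
      ∀ i j, ∃ k : ℕ, R i j = k * δ := by
  set S : ι → ι → ℝ := fun i j => sSup (image2 e.dist (c ⁻¹' {i}) (c ⁻¹' {j})) with hS
  have hne : ∀ x y, (image2 e.dist (c ⁻¹' {c x}) (c ⁻¹' {c y})).Nonempty :=
    fun x y => Nonempty.image2 ⟨x, rfl⟩ ⟨y, rfl⟩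
  have hbound : ∀ x y, ∀ r ∈ image2 e.dist (c ⁻¹' {c x}) (c ⁻¹' {c y}),
      r ≤ e.dist x y + 2 * δ := by
    rintro x y _ ⟨u, hu, v, hv, rfl⟩
    linarith [e.dist_triangle u x v, e.dist_triangle x y v, hdiam u x hu, hdiam y v hv.symm]
  have hS_le : ∀ x y, S (c x) (c y) ≤ e.dist x y + 2 * δ :=
    fun x y => csSup_le (hne x y) (hbound x y)
  have hle_S : ∀ x y, e.dist x y ≤ S (c x) (c y) :=
    fun x y => le_csSup ⟨_, hbound x y⟩ (mem_image2_of_mem rfl rfl)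
  have hS_tri : ∀ x y z, S (c x) (c z) ≤ S (c x) (c y) + S (c y) (c z) := by
    refine fun x y z => csSup_le (hne x z) ?_
    rintro _ ⟨u, hu, w, hw, rfl⟩
    have hu : c u = c x := hu
    have hw : c w = c z := hw
    calc e.dist u w ≤ e.dist u y + e.dist y w := e.dist_triangle u y w
      _ ≤ S (c x) (c y) + S (c y) (c z) := by
        rw [← hu, ← hw]
        exact add_le_add (hle_S u y) (hle_S y w)
  have hS_comm : ∀ i j, S i j = S j i := by
    intro i j
    simp only [hS]
    rw [image2_swap]
    simp_rw [e.dist_comm]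
  have hS_nonneg : ∀ x y, 0 ≤ S (c x) (c y) := fun x y => (e.dist_nonneg x y).trans (hle_S x y)
  have hS_le_ceil : ∀ i j, S i j ≤ ⌈S i j / δ⌉₊ * δ := fun i j => (div_le_iff₀ hδ).1 (Nat.le_ceil _)
  refine ⟨fun i j => ⌈S i j / δ⌉₊ * δ, fun i j => by dsimp only; rw [hS_comm],
    fun x y z => ?_, fun x y => ⟨(hle_S x y).trans (hS_le_ceil _ _), ?_⟩, fun i j => ⟨_, rfl⟩⟩
  · dsimp only
    rw [← add_mul]
    gcongr
    exact_mod_cast Nat.ceil_le.2 <| by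
      push_cast
      rw [div_le_iff₀ hδ, add_mul]
      linarith [hS_tri x y z, hS_le_ceil (c x) (c y), hS_le_ceil (c y) (c z)]
  · have := mul_lt_mul_of_pos_right
      (Nat.ceil_lt_add_one (div_nonneg (hS_nonneg x y) hδ.le)) hδ
    rw [add_mul, div_mul_cancel₀ _ hδ.ne'] at this
    linarith [hS_le x y]

theorem exists_dist_eq_ite (e : MetricCompat X) {ι : Type*} [DecidableEq ι] {c : X → ι}
    (hc : IsLocallyConstant c) {R : ι → ι → ℝ} (hR_comm : ∀ i j, R i j = R j i)
    (hR_tri : ∀ x y z, R (c x) (c z) ≤ R (c x) (c y) + R (c y) (c z))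
    (hR_le : ∀ x y, e.dist x y ≤ R (c x) (c y)) :
    ∃ e' : MetricCompat X, ∀ x y,
      e'.dist x y = if c x = c y then e.dist x y else R (c x) (c y) := by
  set f : X → X → ℝ := fun x y => if c x = c y then e.dist x y else R (c x) (c y) with hf
  have hef : ∀ x y, e.dist x y ≤ f x y := fun x y => by
    simp only [hf]
    split_ifs
    exacts [le_rfl, hR_le x y]
  have hf_nonneg : ∀ x y, 0 ≤ f x y := fun x y => (e.dist_nonneg x y).trans (hef x y)
  have htri : ∀ x y z, f x z ≤ f x y + f y z := by
    intro x y z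
    by_cases hxz : c x = c z
    · calc f x z = e.dist x z := if_pos hxz
        _ ≤ e.dist x y + e.dist y z := e.dist_triangle x y z
        _ ≤ f x y + f y z := add_le_add (hef x y) (hef y z)
    by_cases hxy : c x = c y
    · have : f x z = f y z := by simp only [hf, if_neg hxz, if_neg (hxy ▸ hxz), hxy]
      linarith [hf_nonneg x y]
    by_cases hyz : c y = c z
    · have : f x z = f x y := by simp only [hf, if_neg hxz, if_neg (hyz ▸ hxz), hyz]
      linarith [hf_nonneg y z]
    simpa only [hf, if_neg hxz, if_neg hxy, if_neg hyz] using hR_tri x y z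
  obtain ⟨e', he'⟩ := exists_dist_eq f (fun x => by simp [hf, e.dist_self])
    (fun x y => by simp only [hf, eq_comm (a := c x), e.dist_comm x y, hR_comm (c x)])
    htri
    (fun x y h => e.eq_of_dist_eq_zero (le_antisymm ((hef x y).trans h.le) (e.dist_nonneg x y)))
    (fun x ε hε => by
      filter_upwards [hc.eventually_eq x, (e.nhds_basis_dist x).mem_of_mem hε] with y hy hyε
      simpa [hf, hy] using hyε)
    (fun x U hU => e.exists_forall_lt_mem_of_le hef hU)
  exact ⟨e', fun x y => by rw [he']⟩

theorem exists_mem_closedBall_dist_le_or_eq_nat_mul [T1Space X] [LindelofSpace X]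
    (hX : StronglyZeroDim X) (d : MetricCompat X) {δ : ℝ} (hδ : 0 < δ) :
    ∃ e ∈ closedBall d (3 * δ), ∀ x y, e.dist x y ≤ δ ∨ ∃ k : ℕ, e.dist x y = k * δ := by
  obtain ⟨c, hc, hcU⟩ :=
    hX.exists_isLocallyConstant_nat fun x => (d.nhds_basis_dist x).mem_of_mem (half_pos hδ)
  have hdiam : ∀ x y, c x = c y → d.dist x y ≤ δ := fun x y hxy => by
    obtain ⟨z, hz⟩ := hcU x
    have hx : d.dist z x < δ / 2 := hz x rfl
    have hy : d.dist z y < δ / 2 := hz y hxy.symm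
    linarith [d.dist_triangle x z y, d.dist_comm z x]
  obtain ⟨R, hcomm, htri, hbound, hgrid⟩ := exists_gridValued_cellDist d c hδ hdiam
  obtain ⟨e, he⟩ := exists_dist_eq_ite d hc hcomm htri fun x y => (hbound x y).1
  refine ⟨e, fun x y => ?_, fun x y => ?_⟩ <;> rw [he] <;> split_ifs with h
  · simp [hδ.le]
  · rw [abs_le]
    constructor <;> linarith [hbound x y]
  · exact Or.inl (hdiam x y h)
  · exact Or.inr (hgrid _ _)

theorem dense_interior_setOf_forall_dist_notMem_Ioo [T1Space X] [LindelofSpace X]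
    (hX : StronglyZeroDim X) {a b : ℝ} (ha : 0 ≤ a) (hab : a < b) :
    Dense (interior {d : MetricCompat X |
      ∃ u v, a < u ∧ u < v ∧ v < b ∧ ∀ x y, d.dist x y ∉ Ioo u v}) := by
  refine fun d => (mem_closure_iff_nhds_basis (nhds_basis_closedBall d)).2 fun r hr => ?_
  set δ := min (r / 3) ((b - a) / 3) with hδ_def
  have hδ : 0 < δ := lt_min (by positivity) (by linarith)
  obtain ⟨e, hed, he⟩ := exists_mem_closedBall_dist_le_or_eq_nat_mul hX d hδ
  set k := ⌊a / δ⌋₊ + 1 with hk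
  have hak : a < k * δ := by
    rw [hk, Nat.cast_add, Nat.cast_one, ← div_lt_iff₀ hδ]
    exact Nat.lt_floor_add_one _
  have hkb : (k + 1) * δ < b := by
    have := (le_div_iff₀ hδ).1 (Nat.floor_le (div_nonneg ha hδ.le))
    rw [hk]
    push_cast
    linarith [min_le_right (r / 3) ((b - a) / 3)]
  refine ⟨e, mem_interior_iff_mem_nhds.2 (mem_of_superset
    ((nhds_basis_closedBall e).mem_of_mem (by positivity : 0 < δ / 3)) fun g hg => ?_),
    closedBall_subset_closedBall d (by linarith [min_le_left (r / 3) ((b - a) / 3)]) hed⟩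
  refine ⟨k * δ + δ / 3, (k + 1) * δ - δ / 3, by linarith, by linarith, by linarith,
    fun x y hxy => notMem_Ioo_of_le_or_eq_nat_mul hδ (k := k) (Nat.le_add_left 1 _) (he x y) ?_⟩
  have := abs_le.1 (hg x y)
  exact ⟨by linarith [hxy.1], by linarith [hxy.2]⟩

theorem isNowhereDense_range_dist_mem_residual [T1Space X] [LindelofSpace X]
    (hX : StronglyZeroDim X) :
    {d : MetricCompat X | IsNowhereDense (range (uncurry d.dist))} ∈
      residual (MetricCompat X) := by
  have hgap : ∀ pq : ℚ × ℚ, {d : MetricCompat X | (0 : ℝ) ≤ pq.1 → (pq.1 : ℝ) < pq.2 →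
      ∃ u v, (pq.1 : ℝ) < u ∧ u < v ∧ v < pq.2 ∧ ∀ x y, d.dist x y ∉ Ioo u v} ∈
        residual _ := by
    rintro ⟨p, q⟩
    by_cases hpq : (0 : ℝ) ≤ p ∧ (p : ℝ) < q
    · exact mem_of_superset (residual_of_dense_open isOpen_interior
        (dense_interior_setOf_forall_dist_notMem_Ioo hX hpq.1 hpq.2))
        (interior_subset.trans fun d hd _ _ => hd)
    · exact univ_mem' fun d h1 h2 => absurd ⟨h1, h2⟩ hpq
  filter_upwards [countable_iInter_mem.2 hgap] with d hd
  refine isNowhereDense_of_forall_rat (range_subset_iff.2 fun _ => d.dist_nonneg _ _)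
    fun p q hp hpq => ?_
  obtain ⟨u, v, hpu, huv, hvq, hd⟩ := mem_iInter.1 hd (p, q) hp hpq
  exact ⟨u, v, hpu, huv, hvq, disjoint_right.2 fun _ ⟨⟨x, y⟩, hxy⟩ => hxy ▸ hd x y⟩

end MetricCompat

theorem gapLike_of_isNowhereDense {X : Type*} [TopologicalSpace X] {d : MetricCompat X}
    (hd : IsNowhereDense (range (uncurry d.dist))) : GapLike d := by
  rintro p ⟨U, hU, -, hUsub⟩
  obtain ⟨ε, hε, hεU⟩ := mem_nhdsGE_iff_exists_Ico_subset.1 hU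
  have hrange : {r | ∃ x, d.dist p x = r} ⊆ range (uncurry d.dist) :=
    fun _ ⟨x, hx⟩ => ⟨(p, x), hx⟩
  have hIoo : Ioo 0 ε ⊆ interior (closure (range (uncurry d.dist))) :=
    interior_maximal ((Ioo_subset_Ico_self.trans hεU).trans (hUsub.trans (closure_mono hrange)))
      isOpen_Ioo
  exact (nonempty_Ioo.2 hε).ne_empty (eq_empty_of_subset_empty (hd ▸ hIoo))

theorem nonmeager_totallyDisconnectedRange_and_gapLike_general
    {X : Type*} [TopologicalSpace X] [TopologicalSpace.MetrizableSpace X]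
    [SigmaCompactSpace X]
    (hX : StronglyZeroDim X) :
    ¬ IsMeagre { d : MetricCompat X | ∃ S ∈ ZFamily, ∀ x y : X, d.dist x y ∈ S } ∧
    ¬ IsMeagre { d : MetricCompat X | GapLike d } := by
  have : Nonempty (MetricCompat X) := ⟨⟨TopologicalSpace.metrizableSpaceMetric X, rfl⟩⟩
  have hres := MetricCompat.isNowhereDense_range_dist_mem_residual (X := X) hX
  refine ⟨not_isMeagre_of_mem_residual (mem_of_superset hres fun d hd => ?_),
    not_isMeagre_of_mem_residual (mem_of_superset hres fun d hd => gapLike_of_isNowhereDense hd)⟩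
  exact ⟨_, insert_zero_closure_mem_zFamily (range_subset_iff.2 fun _ => d.dist_nonneg _ _) hd,
    fun x y => mem_insert_of_mem _ (subset_closure ⟨(x, y), rfl⟩)⟩

/-- Corollary 2.17: for a strongly `0`-dimensional, σ-compact, locally compact metrizable
space `X`, the set of metrics with closed totally disconnected range and the set of gap-like
metrics are nonmeager in `(Met(X), D_X)`. -/
theorem nonmeager_totallyDisconnectedRange_and_gapLike
    {X : Type*} [TopologicalSpace X] [TopologicalSpace.MetrizableSpace X]
    [SigmaCompactSpace X] [LocallyCompactSpace X]
    (hX : StronglyZeroDim X) :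
    ¬ IsMeagre { d : MetricCompat X | ∃ S ∈ ZFamily, ∀ x y : X, d.dist x y ∈ S } ∧
    ¬ IsMeagre { d : MetricCompat X | GapLike d } :=
  nonmeager_totallyDisconnectedRange_and_gapLike_general hX
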